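/- arXiv:2511.03443 — 3 statements merged into one kernel-verified Lean document; each statement's English description precedes it below -/
import Mathlib

section
/- Let f : ℝ^{n×p} → ℝ be differentiable with ∇f L-Lipschitz continuous (with respect to the Frobenius norm) for some L ≥ 0, and let η > L. If Z, Y, X' ∈ O^{n,p}_+ satisfy f̄_Z(Y) ≤ f̄_Z(Z) and f̄_Y(X') ≤ f̄_Y(Y), then f(Z) − f(X') ≥ ((η − L)/2)·(‖Y − Z‖_F² + ‖X' − Y‖_F²). -/
open Matrix

attribute [local instance] Matrix.frobeniusNormedAddCommGroup Matrix.frobeniusNormedSpace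

/-- Frobenius norm of a real matrix. -/
noncomputable def fnorm {n p : ℕ} (A : Matrix (Fin n) (Fin p) ℝ) : ℝ :=
  Real.sqrt (∑ i, ∑ j, (A i j) ^ 2)

/-- Frobenius inner product of real matrices. -/
noncomputable def finner {n p : ℕ} (A B : Matrix (Fin n) (Fin p) ℝ) : ℝ :=
  ∑ i, ∑ j, A i j * B i j

/-- `g` is the (Euclidean) gradient of the differentiable function `f`. -/
def IsGradient {n p : ℕ} (f : Matrix (Fin n) (Fin p) ℝ → ℝ)
    (g : Matrix (Fin n) (Fin p) ℝ → Matrix (Fin n) (Fin p) ℝ) : Prop :=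
  Differentiable ℝ f ∧ ∀ Z H, fderiv ℝ f Z H = finner (g Z) H

/-- The proximal linearization `f̄_Z(X) = f(Z) + ⟨∇f(Z), X − Z⟩ + (η/2)‖X − Z‖_F²`. -/
noncomputable def fbar {n p : ℕ} (f : Matrix (Fin n) (Fin p) ℝ → ℝ)
    (g : Matrix (Fin n) (Fin p) ℝ → Matrix (Fin n) (Fin p) ℝ)
    (η : ℝ) (Z X : Matrix (Fin n) (Fin p) ℝ) : ℝ :=
  f Z + finner (g Z) (X - Z) + η / 2 * fnorm (X - Z) ^ 2

/-!
Along the segment from `Z` to `X`, the Lipschitz bound on `∇f` makes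
`t ↦ f(Z + t(X - Z)) - t⟨∇f(Z), X - Z⟩ - (L t²/2)‖X - Z‖²` nonincreasing, which is the descent
lemma `f(X) ≤ f̄_Z(X)` for the parameter `L`. With the parameter `η` instead, `f̄_Z(Y) ≤ f̄_Z(Z) = f(Z)`
then gives `f(Z) - f(Y) ≥ ((η - L)/2)‖Y - Z‖²`; the same bound for the step from `Y` to `X'`, added
to this one, is the claim.
-/

theorem Differentiable.le_add_fderiv_add_sq_of_fderiv_sub_le {E : Type*}
    [NormedAddCommGroup E] [NormedSpace ℝ E] {f : E → ℝ} (hf : Differentiable ℝ f) {L : ℝ}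
    (hLip : ∀ x y v, fderiv ℝ f y v - fderiv ℝ f x v ≤ L * ‖y - x‖ * ‖v‖) (x y : E) :
    f y ≤ f x + fderiv ℝ f x (y - x) + L / 2 * ‖y - x‖ ^ 2 := by
  set v := y - x
  set φ : ℝ → ℝ := fun t => f (x + t • v) - t * fderiv ℝ f x v - L * t ^ 2 / 2 * ‖v‖ ^ 2
  have hφ (t : ℝ) : HasDerivAt φ (fderiv ℝ f (x + t • v) v - fderiv ℝ f x v - L * t * ‖v‖ ^ 2) t := by
    have hline : HasDerivAt (fun t : ℝ => x + t • v) v t := by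
      simpa using ((hasDerivAt_id t).smul_const v).const_add x
    have hsq : HasDerivAt (fun t : ℝ => L * t ^ 2 / 2 * ‖v‖ ^ 2) (L * t * ‖v‖ ^ 2) t :=
      ((((hasDerivAt_pow 2 t).const_mul L).div_const 2).mul_const _).congr_deriv
        (by push_cast; ring)
    exact (((hf _).hasFDerivAt.comp_hasDerivAt t hline).sub
      ((hasDerivAt_id t).mul_const _)).sub hsq |>.congr_deriv (by simp)
  have hφ_anti : AntitoneOn φ (Set.Icc 0 1) := by
    refine antitoneOn_of_deriv_nonpos (convex_Icc 0 1)
      (fun t _ => (hφ t).continuousAt.continuousWithinAt)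
      (fun t _ => (hφ t).differentiableAt.differentiableWithinAt) fun t ht => ?_
    rw [interior_Icc] at ht
    have hv := hLip x (x + t • v) v
    rw [add_sub_cancel_left, norm_smul, Real.norm_of_nonneg ht.1.le] at hv
    rw [(hφ t).deriv]
    linarith
  have h := hφ_anti (Set.left_mem_Icc.2 zero_le_one) (Set.right_mem_Icc.2 zero_le_one) zero_le_one
  simp only [φ, one_smul, zero_smul, add_zero, v, add_sub_cancel] at h
  linarith

section Frobenius

variable {n p : ℕ}

theorem fnorm_eq_norm (A : Matrix (Fin n) (Fin p) ℝ) : fnorm A = ‖A‖ := by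
  rw [frobenius_norm_def, fnorm, Real.sqrt_eq_rpow]
  simp

theorem finner_sub_left (A B C : Matrix (Fin n) (Fin p) ℝ) :
    finner (A - B) C = finner A C - finner B C := by
  simp only [finner, Matrix.sub_apply, sub_mul, Finset.sum_sub_distrib]

theorem finner_le_fnorm_mul_fnorm (A B : Matrix (Fin n) (Fin p) ℝ) :
    finner A B ≤ fnorm A * fnorm B := by
  simpa [finner, fnorm, Fintype.sum_prod_type] using
    Real.sum_mul_le_sqrt_mul_sqrt Finset.univ (fun q : Fin n × Fin p => A q.1 q.2)
      (fun q => B q.1 q.2)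

variable {f : Matrix (Fin n) (Fin p) ℝ → ℝ} {g : Matrix (Fin n) (Fin p) ℝ → Matrix (Fin n) (Fin p) ℝ}
  {L : ℝ}

theorem fbar_self (η : ℝ) (Z : Matrix (Fin n) (Fin p) ℝ) : fbar f g η Z Z = f Z := by
  simp [fbar, finner, fnorm]

theorem IsGradient.fderiv_sub_le (hgrad : IsGradient f g)
    (hLip : ∀ A B, fnorm (g A - g B) ≤ L * fnorm (A - B)) (A B H : Matrix (Fin n) (Fin p) ℝ) :
    fderiv ℝ f B H - fderiv ℝ f A H ≤ L * ‖B - A‖ * ‖H‖ := by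
  rw [hgrad.2, hgrad.2, ← finner_sub_left, ← fnorm_eq_norm, ← fnorm_eq_norm]
  calc finner (g B - g A) H ≤ fnorm (g B - g A) * fnorm H := finner_le_fnorm_mul_fnorm _ _
    _ ≤ L * fnorm (B - A) * fnorm H := mul_le_mul_of_nonneg_right (hLip B A) (Real.sqrt_nonneg _)

theorem IsGradient.le_fbar (hgrad : IsGradient f g)
    (hLip : ∀ A B, fnorm (g A - g B) ≤ L * fnorm (A - B)) (Z X : Matrix (Fin n) (Fin p) ℝ) :
    f X ≤ fbar f g L Z X := by
  -- `fderiv` on matrices carries the product topology, syntactically distinct from the Frobenius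
  -- one of the general lemma (they agree definitionally), so its conclusion is restated, not rewritten.
  calc f X ≤ f Z + fderiv ℝ f Z (X - Z) + L / 2 * ‖X - Z‖ ^ 2 :=
        hgrad.1.le_add_fderiv_add_sq_of_fderiv_sub_le (hgrad.fderiv_sub_le hLip) Z X
    _ = fbar f g L Z X := by rw [fbar, hgrad.2, fnorm_eq_norm]

theorem IsGradient.sufficient_decrease (hgrad : IsGradient f g)
    (hLip : ∀ A B, fnorm (g A - g B) ≤ L * fnorm (A - B)) {η : ℝ}
    {Z Y : Matrix (Fin n) (Fin p) ℝ} (hdec : fbar f g η Z Y ≤ fbar f g η Z Z) :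
    (η - L) / 2 * fnorm (Y - Z) ^ 2 ≤ f Z - f Y := by
  have hdesc := hgrad.le_fbar hLip Z Y
  rw [fbar_self] at hdec
  simp only [fbar] at hdec hdesc
  linarith

end Frobenius

theorem two_step_sufficient_decrease_general
    {n p : ℕ} (f : Matrix (Fin n) (Fin p) ℝ → ℝ)
    (g : Matrix (Fin n) (Fin p) ℝ → Matrix (Fin n) (Fin p) ℝ)
    (L η : ℝ)
    (hgrad : IsGradient f g)
    (hLip : ∀ A B : Matrix (Fin n) (Fin p) ℝ, fnorm (g A - g B) ≤ L * fnorm (A - B))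
    (Z Y X' : Matrix (Fin n) (Fin p) ℝ)
    (hdec1 : fbar f g η Z Y ≤ fbar f g η Z Z)
    (hdec2 : fbar f g η Y X' ≤ fbar f g η Y Y) :
    (η - L) / 2 * (fnorm (Y - Z) ^ 2 + fnorm (X' - Y) ^ 2) ≤ f Z - f X' := by
  linarith [hgrad.sufficient_decrease hLip hdec1, hgrad.sufficient_decrease hLip hdec2]

/-- Lemma `le:des-f`, one step: if `∇f` is `L`-Lipschitz, `η > L`,
and `Z, Y, X' ∈ O^{n,p}_+` satisfy `f̄_Z(Y) ≤ f̄_Z(Z)` and `f̄_Y(X') ≤ f̄_Y(Y)`,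
then `f(Z) − f(X') ≥ ((η − L)/2)(‖Y − Z‖_F² + ‖X' − Y‖_F²)`. -/
theorem two_step_sufficient_decrease
    {n p : ℕ} (f : Matrix (Fin n) (Fin p) ℝ → ℝ)
    (g : Matrix (Fin n) (Fin p) ℝ → Matrix (Fin n) (Fin p) ℝ)
    (L η : ℝ) (hL : 0 ≤ L) (hη : L < η)
    (hgrad : IsGradient f g)
    (hLip : ∀ A B : Matrix (Fin n) (Fin p) ℝ, fnorm (g A - g B) ≤ L * fnorm (A - B))
    (Z Y X' : Matrix (Fin n) (Fin p) ℝ)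
    (hZ : Zᵀ * Z = 1 ∧ ∀ i j, 0 ≤ Z i j)
    (hY : Yᵀ * Y = 1 ∧ ∀ i j, 0 ≤ Y i j)
    (hX' : X'ᵀ * X' = 1 ∧ ∀ i j, 0 ≤ X' i j)
    (hdec1 : fbar f g η Z Y ≤ fbar f g η Z Z)
    (hdec2 : fbar f g η Y X' ≤ fbar f g η Y Y) :
    (η - L) / 2 * (fnorm (Y - Z) ^ 2 + fnorm (X' - Y) ^ 2) ≤ f Z - f X' :=
  two_step_sufficient_decrease_general f g L η hgrad hLip Z Y X' hdec1 hdec2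
end

section
/- Let 1 ≤ p ≤ n, let f : ℝ^{n×p} → ℝ be differentiable, η > 0, and let Y ∈ O^{n,p}_+ with ‖∇f(Y)‖_F ≤ C for some C > 0. Let i be an index with the i-th row of Y identically zero, and let ĵ minimize j ↦ [∇f(Y)]_{i,j} over j ∈ {1,…,p}. Let S be a sign pattern with S_{i,ĵ} = 1, set Ŵ := max(0, (ηY − ∇f(Y)) ⊙ S) (entrywise), and let X' ∈ ℝ^{n×p} be defined columnwise by X'_{:,j} := Ŵ_{:,j}/‖Ŵ_{:,j}‖₂ if Ŵ_{:,j} ≠ 0 and X'_{:,j} := e_{ī(j)} otherwise, where ī(j) ∈ {l : S_{l,j} = 1} minimizes l ↦ [∇f(Y) − ηY]_{l,j} over {l : S_{l,j} = 1}. Then for every j ∈ {1,…,p}, max{0, −[∇f(Y)]_{i,j}} ≤ (η + C)·‖X' − Y‖_F. -/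
open Matrix

attribute [local instance] Matrix.frobeniusNormedAddCommGroup Matrix.frobeniusNormedSpace

/-! By minimality of `ĵ` it suffices to treat `j = ĵ` with `[∇f(Y)]_{i,ĵ} < 0`. Since row `i` of `Y` vanishes and
`S_{i,ĵ} = 1`, `Ŵ_{i,ĵ} = -[∇f(Y)]_{i,ĵ} > 0`, so `X'_{i,ĵ} = Ŵ_{i,ĵ} / ‖Ŵ_{:,ĵ}‖` while
`Y_{i,ĵ} = 0`. On column `ĵ`, `|Ŵ| ≤ |ηY - ∇f(Y)|` entrywise, and `Y_{:,ĵ}` is a unit vector, so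
`‖Ŵ_{:,ĵ}‖ ≤ η + ‖∇f(Y)‖_F ≤ η + C`. Hence
`-[∇f(Y)]_{i,ĵ} = ‖Ŵ_{:,ĵ}‖ X'_{i,ĵ} ≤ (η + C) |(X' - Y)_{i,ĵ}| ≤ (η + C) ‖X' - Y‖_F`. -/

lemma fnorm_nonneg {n p : ℕ} (A : Matrix (Fin n) (Fin p) ℝ) : 0 ≤ fnorm A :=
  Real.sqrt_nonneg _

lemma abs_apply_le_fnorm {n p : ℕ} (A : Matrix (Fin n) (Fin p) ℝ) (i : Fin n) (j : Fin p) :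
    |A i j| ≤ fnorm A := by
  rw [fnorm, ← Real.sqrt_sq_eq_abs]
  refine Real.sqrt_le_sqrt ?_
  calc A i j ^ 2 ≤ ∑ j', A i j' ^ 2 :=
        Finset.single_le_sum (fun j' _ => sq_nonneg (A i j')) (Finset.mem_univ j)
    _ ≤ ∑ i', ∑ j', A i' j' ^ 2 :=
        Finset.single_le_sum (fun i' _ => Finset.sum_nonneg fun j' _ => sq_nonneg (A i' j'))
          (Finset.mem_univ i)

lemma EuclideanSpace.norm_le_norm_of_abs_le {ι : Type*} [Fintype ι]
    {v w : EuclideanSpace ℝ ι} (h : ∀ i, |v i| ≤ |w i|) : ‖v‖ ≤ ‖w‖ := by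
  simp only [EuclideanSpace.norm_eq, Real.norm_eq_abs]
  exact Real.sqrt_le_sqrt <| Finset.sum_le_sum fun i _ =>
    pow_le_pow_left₀ (abs_nonneg _) (h i) 2

lemma EuclideanSpace.apply_le_mul_apply_div_norm {ι : Type*} [Fintype ι]
    (w : EuclideanSpace ℝ ι) (i : ι) (hwi : 0 ≤ w i) {K : ℝ} (hK : ‖w‖ ≤ K) :
    w i ≤ K * (w i / ‖w‖) := by
  have hwi_le : w i ≤ ‖w‖ := (le_abs_self _).trans (PiLp.norm_apply_le w i)
  rcases (norm_nonneg w).eq_or_lt with hw | hw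
  · rw [← hw] at hwi_le ⊢
    simpa using hwi_le
  · calc w i = ‖w‖ * (w i / ‖w‖) := (mul_div_cancel₀ _ hw.ne').symm
      _ ≤ K * (w i / ‖w‖) := mul_le_mul_of_nonneg_right hK (div_nonneg hwi hw.le)

def euclideanCol {n p : ℕ} (A : Matrix (Fin n) (Fin p) ℝ) (j : Fin p) :
    EuclideanSpace ℝ (Fin n) :=
  WithLp.toLp 2 fun l => A l j

@[simp]
lemma euclideanCol_apply {n p : ℕ} (A : Matrix (Fin n) (Fin p) ℝ) (j : Fin p) (l : Fin n) :
    euclideanCol A j l = A l j :=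
  rfl

lemma norm_euclideanCol {n p : ℕ} (A : Matrix (Fin n) (Fin p) ℝ) (j : Fin p) :
    ‖euclideanCol A j‖ = √(∑ l, A l j ^ 2) := by
  simp only [EuclideanSpace.norm_eq, euclideanCol_apply, Real.norm_eq_abs, sq_abs]

lemma norm_euclideanCol_sq {n p : ℕ} (A : Matrix (Fin n) (Fin p) ℝ) (j : Fin p) :
    ‖euclideanCol A j‖ ^ 2 = (Aᵀ * A) j j := by
  rw [norm_euclideanCol, Real.sq_sqrt (Finset.sum_nonneg fun l _ => sq_nonneg _)]
  simp only [Matrix.mul_apply, Matrix.transpose_apply, sq]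

lemma norm_euclideanCol_le_fnorm {n p : ℕ} (A : Matrix (Fin n) (Fin p) ℝ) (j : Fin p) :
    ‖euclideanCol A j‖ ≤ fnorm A := by
  rw [norm_euclideanCol, fnorm]
  exact Real.sqrt_le_sqrt <| Finset.sum_le_sum fun l _ =>
    Finset.single_le_sum (fun j' _ => sq_nonneg (A l j')) (Finset.mem_univ j)

lemma norm_euclideanCol_le_add_fnorm {n p : ℕ} {W Y G : Matrix (Fin n) (Fin p) ℝ} {η : ℝ}
    (hη : 0 ≤ η) {j : Fin p} (hY : (Yᵀ * Y) j j = 1)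
    (hWY : ∀ l, |W l j| ≤ |η * Y l j - G l j|) :
    ‖euclideanCol W j‖ ≤ η + fnorm G := by
  have hYj : ‖euclideanCol Y j‖ = 1 := by
    rw [← pow_eq_one_iff_of_nonneg (norm_nonneg _) two_ne_zero, norm_euclideanCol_sq, hY]
  calc ‖euclideanCol W j‖ ≤ ‖η • euclideanCol Y j - euclideanCol G j‖ :=
        EuclideanSpace.norm_le_norm_of_abs_le fun l => by simpa using hWY l
    _ ≤ ‖η • euclideanCol Y j‖ + ‖euclideanCol G j‖ := norm_sub_le _ _
    _ = η + ‖euclideanCol G j‖ := by rw [norm_smul, hYj, Real.norm_of_nonneg hη, mul_one]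
    _ ≤ η + fnorm G := add_le_add_right (norm_euclideanCol_le_fnorm G j) η

lemma abs_max_zero_mul_le {x s : ℝ} (hs : |s| ≤ 1) : |max 0 (x * s)| ≤ |x| := by
  rw [abs_of_nonneg (le_max_left _ _)]
  refine max_le (abs_nonneg x) ((le_abs_self _).trans ?_)
  rw [abs_mul]
  exact mul_le_of_le_one_right (abs_nonneg x) hs

theorem zero_row_violation_bound_general
    {n p : ℕ}
    (g : Matrix (Fin n) (Fin p) ℝ → Matrix (Fin n) (Fin p) ℝ)
    (η : ℝ) (hη : 0 < η)
    (Y : Matrix (Fin n) (Fin p) ℝ)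
    (hY : Yᵀ * Y = 1 ∧ ∀ i j, 0 ≤ Y i j)
    (C : ℝ) (hgY : fnorm (g Y) ≤ C)
    (i : Fin n) (hzrow : ∀ j, Y i j = 0)
    (jhat : Fin p) (hjhat : ∀ j, g Y i jhat ≤ g Y i j)
    (S : Matrix (Fin n) (Fin p) ℝ)
    (hS01 : ∀ l j, S l j = 0 ∨ S l j = 1)
    (hSi : S i jhat = 1)
    (W : Matrix (Fin n) (Fin p) ℝ)
    (hW : ∀ l j, W l j = max 0 ((η * Y l j - g Y l j) * S l j))
    (X' : Matrix (Fin n) (Fin p) ℝ)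
    (hX'1 : ∀ j, ¬ (∀ l, W l j = 0) →
        ∀ l, X' l j = W l j / Real.sqrt (∑ l', W l' j ^ 2)) :
    ∀ j, max 0 (-(g Y i j)) ≤ (η + C) * fnorm (X' - Y) := by
  intro j
  have hηC : 0 ≤ η + C := by linarith [fnorm_nonneg (g Y)]
  refine (max_le_max le_rfl (neg_le_neg (hjhat j))).trans ?_
  rcases le_or_gt 0 (g Y i jhat) with hnonneg | hneg
  · rw [max_eq_left (by linarith)]
    exact mul_nonneg hηC (fnorm_nonneg _)
  have hWi : W i jhat = -g Y i jhat := by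
    rw [hW, hzrow, hSi, mul_zero, zero_sub, mul_one, max_eq_right (by linarith)]
  have hWcol : ‖euclideanCol W jhat‖ ≤ η + C := by
    refine (norm_euclideanCol_le_add_fnorm hη.le (by rw [hY.1, Matrix.one_apply_eq])
      fun l => ?_).trans (by linarith)
    rw [hW]
    exact abs_max_zero_mul_le (by rcases hS01 l jhat with h | h <;> simp [h])
  have hX'i : X' i jhat = W i jhat / ‖euclideanCol W jhat‖ := by
    rw [norm_euclideanCol]
    exact hX'1 jhat (fun h => by linarith [h i]) i
  calc max 0 (-g Y i jhat) = euclideanCol W jhat i := by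
        rw [euclideanCol_apply, hWi, max_eq_right (by linarith)]
    _ ≤ (η + C) * X' i jhat := by
        rw [hX'i]
        exact EuclideanSpace.apply_le_mul_apply_div_norm _ i (by rw [euclideanCol_apply, hWi]; linarith) hWcol
    _ ≤ (η + C) * fnorm (X' - Y) := by
        refine mul_le_mul_of_nonneg_left ?_ hηC
        simpa [hzrow] using (le_abs_self _).trans (abs_apply_le_fnorm (X' - Y) i jhat)

/-- bound `eq:zrow-yk`: for a zero row `i` of `Y ∈ O^{n,p}_+` with
`‖∇f(Y)‖_F ≤ C`, if `ĵ` minimizes `j ↦ [∇f(Y)]_{i,j}`, `S` is a sign pattern with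
`S_{i,ĵ} = 1`, and `X'` is obtained columnwise from `Ŵ = max(0, (ηY − ∇f(Y)) ⊙ S)`,
then `max{0, −[∇f(Y)]_{i,j}} ≤ (η + C)‖X' − Y‖_F` for every `j`. -/
theorem zero_row_violation_bound
    {n p : ℕ} (hp : 1 ≤ p) (hpn : p ≤ n)
    (f : Matrix (Fin n) (Fin p) ℝ → ℝ)
    (g : Matrix (Fin n) (Fin p) ℝ → Matrix (Fin n) (Fin p) ℝ)
    (hgrad : IsGradient f g)
    (η : ℝ) (hη : 0 < η)
    (Y : Matrix (Fin n) (Fin p) ℝ)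
    (hY : Yᵀ * Y = 1 ∧ ∀ i j, 0 ≤ Y i j)
    (C : ℝ) (hC : 0 < C) (hgY : fnorm (g Y) ≤ C)
    (i : Fin n) (hzrow : ∀ j, Y i j = 0)
    (jhat : Fin p) (hjhat : ∀ j, g Y i jhat ≤ g Y i j)
    (S : Matrix (Fin n) (Fin p) ℝ)
    (hS01 : ∀ l j, S l j = 0 ∨ S l j = 1)
    (hSrow : ∀ l j j', S l j = 1 → S l j' = 1 → j = j')
    (hScol : ∀ j, ∃ l, S l j = 1)
    (hSi : S i jhat = 1)
    (W : Matrix (Fin n) (Fin p) ℝ)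
    (hW : ∀ l j, W l j = max 0 ((η * Y l j - g Y l j) * S l j))
    (ibar : Fin p → Fin n)
    (hibar : ∀ j, (∀ l, W l j = 0) → S (ibar j) j = 1 ∧
        ∀ l, S l j = 1 → g Y (ibar j) j - η * Y (ibar j) j ≤ g Y l j - η * Y l j)
    (X' : Matrix (Fin n) (Fin p) ℝ)
    (hX'1 : ∀ j, ¬ (∀ l, W l j = 0) →
        ∀ l, X' l j = W l j / Real.sqrt (∑ l', W l' j ^ 2))
    (hX'0 : ∀ j, (∀ l, W l j = 0) → ∀ l, X' l j = if l = ibar j then 1 else 0) :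
    ∀ j, max 0 (-(g Y i j)) ≤ (η + C) * fnorm (X' - Y) :=
  zero_row_violation_bound_general g η hη Y hY C hgY i hzrow jhat hjhat S hS01 hSi W hW X' hX'1
end

section
/- Let 1 ≤ p ≤ n and let S ∈ ℝ^{n×p}. Then S = sign(X) for some X ∈ O^{n,p}_+ if and only if all entries of S lie in {0,1}, each row of S contains at most one entry equal to 1, and each column of S contains at least one entry equal to 1. -/
/-!
Columns of a nonnegative matrix with orthonormal columns have pairwise disjoint supports, since
their inner products are sums of nonnegative terms, and no column vanishes. Conversely, the Gram
matrix of a `0/1` pattern whose rows have at most one `1` is diagonal with the column counts as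
entries, so scaling column `j` by the inverse square root of its count gives orthonormal columns
without changing the sign pattern.
-/

open Matrix

/-- The entrywise sign matrix. -/
noncomputable def msign {n p : ℕ} (X : Matrix (Fin n) (Fin p) ℝ) :
    Matrix (Fin n) (Fin p) ℝ :=
  Matrix.of fun i j => if 0 < X i j then 1 else if X i j < 0 then -1 else 0

section GramMatrix

variable {m k R : Type*} [Fintype m] [DecidableEq k]

lemma exists_ne_zero_of_transpose_mul_self_eq_one [Semiring R] [Nontrivial R]
    {X : Matrix m k R} (hX : Xᵀ * X = 1) (j : k) : ∃ i, X i j ≠ 0 := by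
  by_contra! h
  simpa [Matrix.mul_apply, h] using congrFun (congrFun hX j) j

lemma mul_eq_zero_of_transpose_mul_self_eq_one [Semiring R] [PartialOrder R] [IsOrderedRing R]
    {X : Matrix m k R} (hX : Xᵀ * X = 1) (hX0 : ∀ i j, 0 ≤ X i j) {j j' : k} (hj : j ≠ j')
    (i : m) : X i j * X i j' = 0 := by
  have hsum : ∑ i, X i j * X i j' = 0 := by
    simpa [Matrix.mul_apply, hj] using congrFun (congrFun hX j) j'
  exact (Finset.sum_eq_zero_iff_of_nonneg fun i _ => mul_nonneg (hX0 i j) (hX0 i j')).mp hsum i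
    (Finset.mem_univ i)

lemma transpose_mul_self_eq_diagonal_of_zero_one [Semiring R] {S : Matrix m k R}
    (h01 : ∀ i j, S i j = 0 ∨ S i j = 1) (hrow : ∀ i j j', S i j = 1 → S i j' = 1 → j = j') :
    Sᵀ * S = diagonal fun j => ∑ i, S i j := by
  ext j j'
  rw [Matrix.mul_apply, diagonal_apply]
  split_ifs with hj
  · subst hj
    refine Finset.sum_congr rfl fun i _ => ?_
    rcases h01 i j with h | h <;> simp [h]
  · refine Finset.sum_eq_zero fun i _ => ?_
    rcases h01 i j with h | h
    · simp [h]
    rcases h01 i j' with h' | h'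
    · simp [h']
    exact absurd (hrow i j j' h h') hj

end GramMatrix

section Sign

variable {n p : ℕ}

lemma msign_eq_one_iff (X : Matrix (Fin n) (Fin p) ℝ) (i : Fin n) (j : Fin p) :
    msign X i j = 1 ↔ 0 < X i j := by
  by_cases h : 0 < X i j <;> simp [msign, h]
  split_ifs <;> norm_num

lemma msign_eq_zero_or_eq_one_of_nonneg {X : Matrix (Fin n) (Fin p) ℝ} {i : Fin n} {j : Fin p}
    (h : 0 ≤ X i j) : msign X i j = 0 ∨ msign X i j = 1 := by
  rcases h.lt_or_eq with h | h
  · simp [msign, h]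
  · simp [msign, ← h]

lemma msign_eq_self_of_zero_one {S : Matrix (Fin n) (Fin p) ℝ}
    (h01 : ∀ i j, S i j = 0 ∨ S i j = 1) : msign S = S := by
  ext i j
  rcases h01 i j with h | h <;> simp [msign, h]

lemma msign_mul_diagonal_of_pos (X : Matrix (Fin n) (Fin p) ℝ) {d : Fin p → ℝ}
    (hd : ∀ j, 0 < d j) : msign (X * diagonal d) = msign X := by
  ext i j
  simp [msign, mul_diagonal, mul_pos_iff_of_pos_right (hd j), mul_neg_iff, hd j, (hd j).not_gt]

lemma exists_nonneg_orthonormal_msign_eq {S : Matrix (Fin n) (Fin p) ℝ}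
    (h01 : ∀ i j, S i j = 0 ∨ S i j = 1) (hrow : ∀ i j j', S i j = 1 → S i j' = 1 → j = j')
    (hcol : ∀ j, ∃ i, S i j = 1) :
    ∃ X : Matrix (Fin n) (Fin p) ℝ, (Xᵀ * X = 1 ∧ ∀ i j, 0 ≤ X i j) ∧ S = msign X := by
  set c : Fin p → ℝ := fun j => ∑ i, S i j
  have hS0 : ∀ i j, 0 ≤ S i j := fun i j => by rcases h01 i j with h | h <;> simp [h]
  have hc : ∀ j, 0 < c j := fun j => by
    obtain ⟨i, hi⟩ := hcol j
    exact one_pos.trans_le (hi ▸ Finset.single_le_sum (fun k _ => hS0 k j) (Finset.mem_univ i))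
  set d : Fin p → ℝ := fun j => (√(c j))⁻¹
  have hd : ∀ j, 0 < d j := fun j => inv_pos.2 (Real.sqrt_pos.2 (hc j))
  refine ⟨S * diagonal d, ⟨?_, fun i j => ?_⟩, ?_⟩
  · rw [transpose_mul, diagonal_transpose, Matrix.mul_assoc, ← Matrix.mul_assoc Sᵀ,
      transpose_mul_self_eq_diagonal_of_zero_one h01 hrow, diagonal_mul_diagonal,
      diagonal_mul_diagonal, ← diagonal_one]
    congr with j
    have hsq := Real.mul_self_sqrt (hc j).le
    have hpos := Real.sqrt_pos.2 (hc j)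
    simp only [d, c] at hsq hpos ⊢
    field_simp
    linarith
  · simpa [mul_diagonal] using mul_nonneg (hS0 i j) (hd j).le
  · rw [msign_mul_diagonal_of_pos S hd, msign_eq_self_of_zero_one h01]

end Sign

theorem sign_pattern_characterization_general
    {n p : ℕ}
    (S : Matrix (Fin n) (Fin p) ℝ) :
    (∃ X : Matrix (Fin n) (Fin p) ℝ,
        (Xᵀ * X = 1 ∧ ∀ i j, 0 ≤ X i j) ∧ S = msign X) ↔
      ((∀ i j, S i j = 0 ∨ S i j = 1) ∧
        (∀ i j j', S i j = 1 → S i j' = 1 → j = j') ∧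
        (∀ j, ∃ i, S i j = 1)) := by
  constructor
  · rintro ⟨X, ⟨hX, hX0⟩, rfl⟩
    refine ⟨fun i j => msign_eq_zero_or_eq_one_of_nonneg (hX0 i j),
      fun i j j' hj hj' => ?_, fun j => ?_⟩
    · rw [msign_eq_one_iff] at hj hj'
      by_contra hne
      exact (mul_pos hj hj').ne' (mul_eq_zero_of_transpose_mul_self_eq_one hX hX0 hne i)
    · obtain ⟨i, hi⟩ := exists_ne_zero_of_transpose_mul_self_eq_one hX j
      exact ⟨i, (msign_eq_one_iff X i j).2 ((hX0 i j).lt_of_ne' hi)⟩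
  · rintro ⟨h01, hrow, hcol⟩
    exact exists_nonneg_orthonormal_msign_eq h01 hrow hcol

/-- for `1 ≤ p ≤ n`, a matrix `S` equals `sign(X)` for some
`X ∈ O^{n,p}_+` iff its entries lie in `{0,1}`, each row has at most one entry
equal to `1`, and each column has at least one entry equal to `1`. -/
theorem sign_pattern_characterization
    {n p : ℕ} (hp : 1 ≤ p) (hpn : p ≤ n)
    (S : Matrix (Fin n) (Fin p) ℝ) :
    (∃ X : Matrix (Fin n) (Fin p) ℝ,
        (Xᵀ * X = 1 ∧ ∀ i j, 0 ≤ X i j) ∧ S = msign X) ↔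
      ((∀ i j, S i j = 0 ∨ S i j = 1) ∧
        (∀ i j j', S i j = 1 → S i j' = 1 → j = j') ∧
        (∀ j, ∃ i, S i j = 1)) :=
  sign_pattern_characterization_general S
end
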